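/- arXiv:2005.13504 — 2 statements merged into one kernel-verified Lean document; each statement's English description precedes it below -/
import Mathlib

section
/- Let η ∈ [0,1), H₀ > 0, t_* > 0, and let the sequence (t_i) satisfy t_0 = t_* and t_{i+1} = t_i(1+α_i) with 0 < α_i ≤ H₀·t_i^{η-1}. Then for every i, t_i ≤ (t_*^{1-η} + (1-η)·H₀·i)^{1/(1-η)}. -/
/-!
Pass to `s_i = t_i ^ (1 - η)`. Bernoulli's inequality `(1 + α) ^ (1 - η) ≤ 1 + (1 - η) α` and the
step restriction `t_i ^ (1 - η) α_i ≤ H₀` give `s_{i+1} ≤ s_i + (1 - η) H₀`, so `s_i` grows at most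
linearly; taking the `1 / (1 - η)`-th power undoes the substitution.
-/

open Real

theorem rpow_mul_one_add_le_add {η H s α : ℝ} (hη0 : 0 ≤ η) (hη1 : η ≤ 1) (hs : 0 < s)
    (hα0 : 0 ≤ α) (hα : α ≤ H * s ^ (η - 1)) :
    (s * (1 + α)) ^ (1 - η) ≤ s ^ (1 - η) + (1 - η) * H := by
  have hsα : s ^ (1 - η) * α ≤ H :=
    calc s ^ (1 - η) * α ≤ s ^ (1 - η) * (H * s ^ (η - 1)) := by gcongr
      _ = H * s ^ ((1 - η) + (η - 1)) := by rw [rpow_add hs]; ring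
      _ = H := by norm_num
  have bernoulli : (1 + α) ^ (1 - η) ≤ 1 + (1 - η) * α :=
    rpow_one_add_le_one_add_mul_self (by linarith) (by linarith) (by linarith)
  calc (s * (1 + α)) ^ (1 - η) = s ^ (1 - η) * (1 + α) ^ (1 - η) := mul_rpow hs.le (by linarith)
    _ ≤ s ^ (1 - η) * (1 + (1 - η) * α) := by gcongr
    _ = s ^ (1 - η) + (1 - η) * (s ^ (1 - η) * α) := by ring
    _ ≤ s ^ (1 - η) + (1 - η) * H := by gcongr

theorem le_add_mul_of_forall_lt_succ_le_add {u : ℕ → ℝ} {c : ℝ} {N : ℕ}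
    (h : ∀ i < N, u (i + 1) ≤ u i + c) : ∀ i ≤ N, u i ≤ u 0 + c * i := by
  intro i hi
  induction i with
  | zero => simp
  | succ i ih =>
    have := h i (by omega)
    have := ih (by omega)
    push_cast
    linarith

theorem pos_of_forall_lt_eq_mul_one_add {t α : ℕ → ℝ} {N : ℕ} (h0 : 0 < t 0)
    (hrec : ∀ i < N, t (i + 1) = t i * (1 + α i)) (hα : ∀ i < N, 0 ≤ α i) :
    ∀ i ≤ N, 0 < t i := by
  intro i hi
  induction i with
  | zero => exact h0
  | succ i ih =>
    rw [hrec i (by omega)]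
    have := hα i (by omega)
    have := ih (by omega)
    positivity

theorem grid_time_upper_bound_general (η H₀ tstar : ℝ) (hη : η ∈ Set.Ico (0:ℝ) 1)
    (htstar : 0 < tstar)
    (N : ℕ) (t α : ℕ → ℝ)
    (h0 : t 0 = tstar)
    (hrec : ∀ i < N, t (i+1) = t i * (1 + α i))
    (hα : ∀ i < N, 0 < α i ∧ α i ≤ H₀ * t i ^ (η - 1)) :
    ∀ i ≤ N, t i ≤ (tstar ^ (1 - η) + (1 - η) * H₀ * i) ^ (1 / (1 - η)) := by
  obtain ⟨hη0, hη1⟩ := hη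
  have ht : ∀ i ≤ N, 0 < t i :=
    pos_of_forall_lt_eq_mul_one_add (h0 ▸ htstar) hrec fun i hi => (hα i hi).1.le
  have hstep : ∀ i < N, t (i + 1) ^ (1 - η) ≤ t i ^ (1 - η) + (1 - η) * H₀ := fun i hi => by
    rw [hrec i hi]
    exact rpow_mul_one_add_le_add hη0 hη1.le (ht i hi.le) (hα i hi).1.le (hα i hi).2
  intro i hi
  have hlin := le_add_mul_of_forall_lt_succ_le_add (u := fun j => t j ^ (1 - η)) hstep i hi
  rw [h0, mul_assoc] at hlin
  rw [one_div, mul_assoc, le_rpow_inv_iff_of_pos (ht i hi).le _ (by linarith)]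
  · exact hlin
  · exact (rpow_nonneg (ht i hi).le _).trans hlin

theorem grid_time_upper_bound (η H₀ tstar : ℝ) (hη : η ∈ Set.Ico (0:ℝ) 1)
    (hH₀ : 0 < H₀) (htstar : 0 < tstar)
    (N : ℕ) (t α : ℕ → ℝ)
    (h0 : t 0 = tstar)
    (hrec : ∀ i < N, t (i+1) = t i * (1 + α i))
    (hα : ∀ i < N, 0 < α i ∧ α i ≤ H₀ * t i ^ (η - 1)) :
    ∀ i ≤ N, t i ≤ (tstar ^ (1 - η) + (1 - η) * H₀ * i) ^ (1 / (1 - η)) :=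
  grid_time_upper_bound_general η H₀ tstar hη htstar N t α h0 hrec hα
end

section
/- Under the setting of the fundamental error recursion (v_{i+1} - y_{i+1} = (I+K_i)(v_i - y_i) - Θ_i with v_0 = y_0), if additionally |(I+K_j)·ω_j| ≤ 1 for all j, then sup_{i=0,...,N} |w_i(v_i - y_i)| ≤ Σ_{l=0}^{N-1} |ω_l·w_l·Θ_l|. -/
/-!
Since `w (i+1) = ω i * w i`, the weighted errors `x i = w i • (v i - y i)` satisfy
`x (i+1) = (ω i • (I + K i)) (x i) - (ω i * w i) • Θ i` with a contraction in front of `x i`,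
so `‖x i‖` grows by at most `‖(ω i * w i) • Θ i‖` per step; summing from `x 0 = 0` gives the bound.
-/

open Finset

theorem le_add_sum_range_of_succ_le {u a : ℕ → ℝ} {N : ℕ}
    (h : ∀ i < N, u (i + 1) ≤ u i + a i) :
    ∀ i ≤ N, u i ≤ u 0 + ∑ l ∈ range i, a l := by
  intro i hi
  induction i with
  | zero => simp
  | succ i ih =>
    calc u (i + 1) ≤ u i + a i := h i hi
      _ ≤ u 0 + ∑ l ∈ range i, a l + a i := by gcongr; exact ih (by omega)
      _ = u 0 + ∑ l ∈ range (i + 1), a l := by rw [sum_range_succ, add_assoc]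

section

variable {𝕜 E : Type*} [NontriviallyNormedField 𝕜] [NormedAddCommGroup E] [NormedSpace 𝕜 E]

theorem norm_smul_map_sub_le {A : E →L[𝕜] E} {ω : 𝕜} (hA : ‖ω • A‖ ≤ 1) (w : 𝕜) (e θ : E) :
    ‖(ω * w) • (A e - θ)‖ ≤ ‖w • e‖ + ‖(ω * w) • θ‖ := by
  have hsplit : (ω * w) • (A e - θ) = (ω • A) (w • e) - (ω * w) • θ := by
    rw [smul_sub, smul_apply, map_smul, smul_smul]
  calc ‖(ω * w) • (A e - θ)‖ ≤ ‖(ω • A) (w • e)‖ + ‖(ω * w) • θ‖ := by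
        rw [hsplit]; exact norm_sub_le _ _
    _ ≤ ‖w • e‖ + ‖(ω * w) • θ‖ := by
        gcongr
        exact (ω • A).le_of_opNorm_le hA _ |>.trans_eq (one_mul _)

end

theorem numerical_error_estimate_contractive (n N : ℕ)
    (w ω : ℕ → ℝ) (hw : ∀ i ≤ N, 0 < w i)
    (hω : ∀ i < N, ω i = w (i+1) / w i)
    (v y Θ : ℕ → EuclideanSpace ℝ (Fin n))
    (K : ℕ → EuclideanSpace ℝ (Fin n) →L[ℝ] EuclideanSpace ℝ (Fin n))
    (h0 : v 0 = y 0)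
    (hrec : ∀ i < N, v (i+1) - y (i+1)
      = ((ContinuousLinearMap.id ℝ (EuclideanSpace ℝ (Fin n)) + K i)) (v i - y i) - Θ i)
    (hK : ∀ j < N, ‖ω j • (ContinuousLinearMap.id ℝ (EuclideanSpace ℝ (Fin n)) + K j)‖ ≤ 1) :
    ∀ i ≤ N, ‖w i • (v i - y i)‖ ≤ ∑ l ∈ Finset.range N, ‖(ω l * w l) • Θ l‖ := by
  have hstep : ∀ i < N, ‖w (i + 1) • (v (i + 1) - y (i + 1))‖
      ≤ ‖w i • (v i - y i)‖ + ‖(ω i * w i) • Θ i‖ := by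
    intro i hi
    have hweight : w (i + 1) = ω i * w i := by
      rw [hω i hi, div_mul_cancel₀ _ (hw i hi.le).ne']
    rw [hrec i hi, hweight]
    exact norm_smul_map_sub_le (hK i hi) _ _ _
  intro i hi
  calc ‖w i • (v i - y i)‖
      ≤ ‖w 0 • (v 0 - y 0)‖ + ∑ l ∈ range i, ‖(ω l * w l) • Θ l‖ :=
        le_add_sum_range_of_succ_le (u := fun i => ‖w i • (v i - y i)‖) hstep i hi
    _ = ∑ l ∈ range i, ‖(ω l * w l) • Θ l‖ := by simp [h0]
    _ ≤ ∑ l ∈ range N, ‖(ω l * w l) • Θ l‖ :=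
        sum_le_sum_of_subset_of_nonneg (range_subset_range.2 hi) fun _ _ _ => norm_nonneg _
end
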